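/- For N ≥ 1 and d ≥ 1, ∑_{m ∈ Σ_{d,N}} m^{-1} ≤ (1/d) · ( ∑_{m ∈ Π_N} m^{-1/d} )^d, and ∑_{m ∈ Π_N} m^{-1/d} = ∏_{p prime, p ≤ N} 1/(1 - p^{-1/d}) < ∞. -/

import Mathlib

/-- `Π_N`: the `N`-smooth positive integers. -/
def PiSet (N : ℕ) : Set ℕ := {m | 0 < m ∧ ∀ p : ℕ, p.Prime → p ∣ m → p ≤ N}

/-- `Σ_{d,N}`: sums of exactly `d` elements of `Π_N`. -/
def SigmaSet (d N : ℕ) : Set ℕ :=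
  {m | ∃ f : Fin d → ℕ, (∀ i, f i ∈ PiSet N) ∧ ∑ i, f i = m}

/-!
Write `g m = m ^ (-1/d)`. By AM–GM, `1 / (m₁ + ⋯ + m_d) ≤ (1/d) ∏ g mᵢ` for `mᵢ ∈ Π_N`. Choosing
one representation `m = m₁ + ⋯ + m_d` for each `m ∈ Σ_{d,N}` embeds `Σ_{d,N}` into `Π_N ^ d`, so
`∑_{Σ_{d,N}} 1/m` is dominated by `(1/d) ∑_{Π_N ^ d} ∏ g mᵢ = (1/d) (∑_{Π_N} g)^d`. Since `g` is
completely multiplicative with `g p < 1` at primes, the last series is the Euler product over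
the primes `p ≤ N`.
-/

open Finset

lemma PiSet_eq_smoothNumbers (N : ℕ) : PiSet N = Nat.smoothNumbers (N + 1) := by
  ext m
  refine ⟨fun ⟨_, hm⟩ ↦ Nat.mem_smoothNumbers'.mpr fun p hp hpm ↦ Nat.lt_succ_of_le (hm p hp hpm),
    fun hm ↦ ⟨Nat.pos_of_ne_zero (Nat.ne_zero_of_mem_smoothNumbers hm), fun p hp hpm ↦
      Nat.le_of_lt_succ (Nat.mem_smoothNumbers'.mp hm p hp hpm)⟩⟩

lemma hasSum_smoothNumbers_rpow_neg {s : ℝ} (hs : 0 < s) (N : ℕ) :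
    HasSum (fun m : N.smoothNumbers ↦ (m : ℝ) ^ (-s))
      (∏ p ∈ N.primesBelow, (1 - (p : ℝ) ^ (-s))⁻¹) := by
  let f : ℕ →* ℝ :=
    { toFun := fun n ↦ (n : ℝ) ^ (-s)
      map_one' := by simp
      map_mul' := fun m n ↦ by push_cast; exact Real.mul_rpow m.cast_nonneg n.cast_nonneg }
  have hf_prime {p : ℕ} (hp : p.Prime) : ‖f p‖ < 1 := by
    change ‖(p : ℝ) ^ (-s)‖ < 1
    rw [Real.norm_of_nonneg (Real.rpow_nonneg p.cast_nonneg _)]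
    exact Real.rpow_lt_one_of_one_lt_of_neg (mod_cast hp.one_lt) (neg_neg_of_pos hs)
  exact (EulerProduct.summable_and_hasSum_smoothNumbers_prod_primesBelow_geometric hf_prime N).2

lemma hasSum_fin_pi_prod {β : Type*} {g : β → ℝ} (hg : 0 ≤ g) {a : ℝ} (h : HasSum g a) (d : ℕ) :
    HasSum (fun f : Fin d → β ↦ ∏ i, g (f i)) (a ^ d) := by
  induction d with
  | zero => simp
  | succ n ih =>
    have hsum : Summable fun x : β × (Fin n → β) ↦ g x.1 * ∏ i, g (x.2 i) :=
      Summable.mul_of_nonneg (f := g) (g := fun f : Fin n → β ↦ ∏ i, g (f i))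
        h.summable ih.summable hg fun _ ↦ prod_nonneg fun _ _ ↦ hg _
    have hprod : HasSum (fun x : β × (Fin n → β) ↦ g x.1 * ∏ i, g (x.2 i)) (a * a ^ n) :=
      HasSum.mul (f := g) (g := fun f : Fin n → β ↦ ∏ i, g (f i)) h ih hsum
    rw [pow_succ', ← (Fin.consEquiv fun _ ↦ β).hasSum_iff]
    convert hprod using 1
    ext x
    simp [Fin.prod_univ_succ, Fin.consEquiv]

lemma one_div_sum_le_prod_rpow {ι : Type*} [Fintype ι] [Nonempty ι] {x : ι → ℝ}
    (hx : ∀ i, 0 < x i) :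
    1 / ∑ i, x i ≤ 1 / Fintype.card ι * ∏ i, x i ^ (-1 / Fintype.card ι : ℝ) := by
  set n : ℝ := (Fintype.card ι : ℝ)
  have hn : 0 < n := by positivity
  set G := ∏ i, x i ^ n⁻¹
  have hG : 0 < G := prod_pos fun i _ ↦ Real.rpow_pos_of_pos (hx i) _
  have amgm : G ≤ n⁻¹ * ∑ i, x i := by
    rw [mul_sum]
    refine Real.geom_mean_le_arith_mean_weighted _ _ _ (fun _ _ ↦ by positivity) ?_
      fun i _ ↦ (hx i).le
    simp [n, sum_const, card_univ]
  have hG_inv : ∏ i, x i ^ (-1 / n) = G⁻¹ := by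
    rw [← prod_inv_distrib]
    exact prod_congr rfl fun i _ ↦ by rw [neg_div, one_div, Real.rpow_neg (hx i).le]
  calc 1 / ∑ i, x i ≤ 1 / (n * G) := by
        gcongr
        calc n * G ≤ n * (n⁻¹ * ∑ i, x i) := by gcongr
          _ = ∑ i, x i := by field_simp
    _ = 1 / n * ∏ i, x i ^ (-1 / n) := by rw [hG_inv, one_div, one_div, mul_inv]

lemma summable_and_tsum_le_of_le_comp_injective {α β : Type*} {f : β → ℝ} {g : α → ℝ}
    (hf : 0 ≤ f) (hg : 0 ≤ g) (hg_sum : Summable g) {e : β → α} (he : e.Injective)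
    (hfg : ∀ b, f b ≤ g (e b)) :
    Summable f ∧ ∑' b, f b ≤ ∑' a, g a := by
  have hge : Summable (g ∘ e) := hg_sum.comp_injective he
  have hf_sum : Summable f := .of_nonneg_of_le hf hfg hge
  exact ⟨hf_sum, (hf_sum.tsum_le_tsum hfg hge).trans
    (hge.tsum_le_tsum_of_inj e he (fun a _ ↦ hg a) (fun _ ↦ le_rfl) hg_sum)⟩

lemma summable_and_tsum_SigmaSet_le {d N : ℕ} (hd : 1 ≤ d) {a : ℝ}
    (ha : HasSum (fun m : PiSet N ↦ ((m : ℕ) : ℝ) ^ (-(1 : ℝ) / d)) a) :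
    Summable (fun m : SigmaSet d N ↦ (1 : ℝ) / (m : ℕ)) ∧
      ∑' m : SigmaSet d N, (1 : ℝ) / (m : ℕ) ≤ 1 / d * a ^ d := by
  have : Nonempty (Fin d) := ⟨⟨0, hd⟩⟩
  have hrep (m : SigmaSet d N) : ∃ f : Fin d → PiSet N, ∑ i, (f i : ℕ) = m := by
    obtain ⟨f, hf, hsum⟩ := m.2
    exact ⟨fun i ↦ ⟨f i, hf i⟩, hsum⟩
  choose rep hrep using hrep
  have hinj : rep.Injective := fun m m' h ↦ Subtype.ext <| by rw [← hrep m, ← hrep m', h]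
  have hbound (m : SigmaSet d N) :
      (1 : ℝ) / (m : ℕ) ≤ 1 / d * ∏ i, (((rep m i : ℕ) : ℝ) ^ (-(1 : ℝ) / d)) := by
    simpa [← hrep m] using one_div_sum_le_prod_rpow (x := fun i ↦ ((rep m i : ℕ) : ℝ))
      fun i ↦ mod_cast (rep m i).2.1
  have hg : 0 ≤ fun m : PiSet N ↦ ((m : ℕ) : ℝ) ^ (-(1 : ℝ) / d) :=
    fun _ ↦ Real.rpow_nonneg (Nat.cast_nonneg _) _
  have hpow := (hasSum_fin_pi_prod hg ha d).mul_left ((1 : ℝ) / d)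
  rw [← hpow.tsum_eq]
  exact summable_and_tsum_le_of_le_comp_injective (fun _ ↦ by positivity)
    (fun _ ↦ by positivity) hpow.summable hinj hbound

theorem sigma_sum_bound_and_euler_product_general (N d : ℕ) (hd : 1 ≤ d) :
    Summable (fun m : PiSet N => ((m : ℕ) : ℝ) ^ (-(1 : ℝ) / d)) ∧
    Summable (fun m : SigmaSet d N => (1 : ℝ) / (m : ℕ)) ∧
    (∑' m : SigmaSet d N, (1 : ℝ) / (m : ℕ)) ≤
      (1 / d) * (∑' m : PiSet N, ((m : ℕ) : ℝ) ^ (-(1 : ℝ) / d)) ^ d ∧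
    (∑' m : PiSet N, ((m : ℕ) : ℝ) ^ (-(1 : ℝ) / d)) =
      ∏ p ∈ (Finset.range (N + 1)).filter Nat.Prime,
        1 / (1 - (p : ℝ) ^ (-(1 : ℝ) / d)) := by
  have hs : (0 : ℝ) < 1 / d := by positivity
  have hPi : HasSum (fun m : PiSet N ↦ ((m : ℕ) : ℝ) ^ (-(1 : ℝ) / d))
      (∏ p ∈ (Finset.range (N + 1)).filter Nat.Prime, 1 / (1 - (p : ℝ) ^ (-(1 : ℝ) / d))) := by
    rw [PiSet_eq_smoothNumbers]
    simpa [neg_div, Nat.primesBelow] using hasSum_smoothNumbers_rpow_neg hs (N + 1)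
  obtain ⟨hSigma, hle⟩ := summable_and_tsum_SigmaSet_le hd hPi
  exact ⟨hPi.summable, hSigma, hPi.tsum_eq ▸ hle, hPi.tsum_eq⟩

theorem sigma_sum_bound_and_euler_product (N d : ℕ) (hN : 1 ≤ N) (hd : 1 ≤ d) :
    Summable (fun m : PiSet N => ((m : ℕ) : ℝ) ^ (-(1 : ℝ) / d)) ∧
    Summable (fun m : SigmaSet d N => (1 : ℝ) / (m : ℕ)) ∧
    (∑' m : SigmaSet d N, (1 : ℝ) / (m : ℕ)) ≤
      (1 / d) * (∑' m : PiSet N, ((m : ℕ) : ℝ) ^ (-(1 : ℝ) / d)) ^ d ∧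
    (∑' m : PiSet N, ((m : ℕ) : ℝ) ^ (-(1 : ℝ) / d)) =
      ∏ p ∈ (Finset.range (N + 1)).filter Nat.Prime,
        1 / (1 - (p : ℝ) ^ (-(1 : ℝ) / d)) :=
  sigma_sum_bound_and_euler_product_general N d hd
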